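/- arXiv:2405.16471 — 2 statements merged into one kernel-verified Lean document; each statement's English description precedes it below -/
import Mathlib

section
/- For fixed blocklength N and packet size B, the function γ ↦ Q( (ln(1+γ) - (B/N)ln 2) / √((1/N)(1 - (1+γ)^{-2})) ) is strictly decreasing in γ > 0, without requiring ln(1+γ) > (B/N)ln 2; equivalently, the argument of Q is strictly increasing in γ > 0. -/
open Real MeasureTheory

private lemma fbl_aux_deriv (γ c sN : ℝ) (hγ : 0 < γ) (hc : 0 < c) (hsN : 0 < sN) :
    ∃ d, HasDerivAt (fun x => (Real.log (1 + x) - c) * sN / Real.sqrt (1 - ((1 + x) ^ 2)⁻¹)) d γ ∧ 0 < d := by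
  have hu : (1:ℝ) < 1 + γ := by linarith
  have hu0 : (0:ℝ) < 1 + γ := by linarith
  have hu2 : (1:ℝ) < (1 + γ)^2 := by nlinarith
  have hg : (0:ℝ) < 1 - ((1 + γ)^2)⁻¹ := by
    rw [sub_pos]; exact inv_lt_one_of_one_lt₀ hu2
  have hs : 0 < Real.sqrt (1 - ((1 + γ)^2)⁻¹) := Real.sqrt_pos.2 hg
  have h1 : HasDerivAt (fun x : ℝ => 1 + x) 1 γ := by
    simpa using (hasDerivAt_id γ).const_add 1
  have hA : HasDerivAt (fun x : ℝ => (Real.log (1 + x) - c) * sN)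
      ((1 + γ)⁻¹ * 1 * sN) γ :=
    (((Real.hasDerivAt_log hu0.ne').comp γ h1).sub_const c).mul_const sN
  have hinner : HasDerivAt (fun x : ℝ => 1 - ((1 + x) ^ 2)⁻¹)
      (0 - (-(2 * (1+γ)^1 * 1) / ((1+γ)^2)^2)) γ :=
    (hasDerivAt_const γ 1).sub ((h1.pow 2).inv (by positivity))
  have hBv : HasDerivAt (fun x : ℝ => Real.sqrt (1 - ((1 + x) ^ 2)⁻¹))
      (1 / (2 * Real.sqrt (1 - ((1+γ)^2)⁻¹)) * (0 - (-(2 * (1+γ)^1 * 1) / ((1+γ)^2)^2))) γ :=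
    (Real.hasDerivAt_sqrt hg.ne').comp γ hinner
  have hD := hA.div hBv hs.ne'
  refine ⟨_, hD, ?_⟩
  set s := Real.sqrt (1 - ((1 + γ)^2)⁻¹) with hsdef
  have hss : s * s * (1+γ)^2 = (1+γ)^2 - 1 := by
    have h := Real.mul_self_sqrt hg.le
    rw [← hsdef] at h
    rw [h, sub_mul, inv_mul_cancel₀ (pow_ne_zero 2 hu0.ne'), one_mul]
  have hlog : Real.log (1 + γ) < (1 + γ)^2 - 1 := by
    have := Real.log_lt_sub_one_of_pos hu0 (by linarith)
    nlinarith
  apply div_pos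
  · have e : (1 + γ)⁻¹ * 1 * sN * s -
        (Real.log (1 + γ) - c) * sN * (1 / (2 * s) * (0 - -(2 * (1 + γ) ^ 1 * 1) / ((1 + γ) ^ 2) ^ 2))
        = sN * ((1+γ)^2 - 1 - Real.log (1+γ) + c) / ((1+γ)^3 * s) := by
      rw [eq_div_iff (by positivity)]
      have step : ((1 + γ)⁻¹ * 1 * sN * s -
          (Real.log (1 + γ) - c) * sN * (1 / (2 * s) * (0 - -(2 * (1 + γ) ^ 1 * 1) / ((1 + γ) ^ 2) ^ 2)))
          * ((1+γ)^3 * s) = sN * (s * s * (1+γ)^2) - (Real.log (1+γ) - c) * sN := by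
        field_simp
        ring
      rw [step, hss]
      ring
    rw [e]
    apply div_pos
    · nlinarith
    · positivity
  · positivity

private lemma fbl_aux_Q (Q : ℝ → ℝ)
    (hQ : ∀ x, Q x = ∫ t in Set.Ioi x, (1 / Real.sqrt (2 * π)) * Real.exp (-t ^ 2 / 2)) :
    StrictAnti Q := by
  set φ : ℝ → ℝ := fun t => (1 / Real.sqrt (2 * π)) * Real.exp (-t ^ 2 / 2) with hφ
  have hint : Integrable φ := by
    have h := (integrable_exp_neg_mul_sq (by norm_num : (0:ℝ) < 1/2)).const_mul (1 / Real.sqrt (2 * π))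
    refine h.congr (Filter.Eventually.of_forall fun t => ?_)
    simp only [hφ]
    ring_nf
  have hpos : ∀ t, 0 < φ t := by
    intro t
    have : 0 < Real.sqrt (2 * π) := Real.sqrt_pos.2 (by positivity)
    positivity
  intro x y hxy
  have hsplit : ∫ t in Set.Ioi x, φ t = (∫ t in Set.Ioc x y, φ t) + ∫ t in Set.Ioi y, φ t := by
    rw [← Set.Ioc_union_Ioi_eq_Ioi hxy.le]
    exact setIntegral_union (Set.Ioc_disjoint_Ioi le_rfl) measurableSet_Ioi
      hint.integrableOn hint.integrableOn
  have hmid : 0 < ∫ t in Set.Ioc x y, φ t := by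
    apply setIntegral_pos_iff_support_of_nonneg_ae (by filter_upwards with t using (hpos t).le) hint.integrableOn |>.2
    have : Function.support φ = Set.univ := by
      ext t; simp [Function.mem_support, (hpos t).ne']
    rw [this, Set.univ_inter]
    simpa using hxy
  rw [hQ x, hQ y]
  linarith [hsplit, hmid]

/-- For fixed blocklength `N` and rate `R = B/N`, the argument
`f(γ) = (ln(1+γ) - R·ln 2)·√N / √(1 - (1+γ)^{-2})` is strictly increasing on
`(0,∞)`, hence `Q ∘ f` is strictly decreasing on `(0,∞)`. -/
theorem fbl_error_decreasing_in_sinr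
    (N B : ℝ) (hN : 0 < N) (hB : 0 < B)
    (Q : ℝ → ℝ)
    (hQ : ∀ x, Q x = ∫ t in Set.Ioi x, (1 / Real.sqrt (2 * π)) * Real.exp (-t ^ 2 / 2))
    (f : ℝ → ℝ)
    (hf : ∀ γ, f γ = (Real.log (1 + γ) - (B / N) * Real.log 2) * Real.sqrt N
        / Real.sqrt (1 - ((1 + γ) ^ 2)⁻¹)) :
    StrictMonoOn f (Set.Ioi (0:ℝ)) ∧ StrictAntiOn (fun γ => Q (f γ)) (Set.Ioi (0:ℝ)) := by
  have hc : 0 < (B / N) * Real.log 2 := by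
    have := Real.log_pos (by norm_num : (1:ℝ) < 2)
    positivity
  have hsN : 0 < Real.sqrt N := Real.sqrt_pos.2 hN
  have hfe : f = fun x => (Real.log (1 + x) - (B / N) * Real.log 2) * Real.sqrt N
      / Real.sqrt (1 - ((1 + x) ^ 2)⁻¹) := funext hf
  have hmono : StrictMonoOn f (Set.Ioi (0:ℝ)) := by
    rw [hfe]
    apply strictMonoOn_of_deriv_pos (convex_Ioi 0)
    · intro x hx
      obtain ⟨d, hd, _⟩ := fbl_aux_deriv x _ _ hx hc hsN
      exact hd.continuousAt.continuousWithinAt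
    · rw [interior_Ioi]
      intro x hx
      obtain ⟨d, hd, hdpos⟩ := fbl_aux_deriv x _ _ hx hc hsN
      rw [hd.deriv]
      exact hdpos
  refine ⟨hmono, fun a ha b hb hab => ?_⟩
  exact fbl_aux_Q Q hQ (hmono ha hb hab)
end

section
/- For a stable FCFS queue, the virtual delay W(t) = inf{w ≥ 0 : A(0,t) ≤ D(0, t+w)} satisfies P(W(t) > w) ≤ P( sup_{0≤u≤t} { A(u,t) - S(u, t+w) } ≥ 0 ) whenever the departure process satisfies D(0,s) ≥ inf_{0≤u≤s}{A(0,u) + S(u,s)} for all s (the min-plus service curve property). -/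
open MeasureTheory

/-- For a stable FCFS queue with additive arrival, service, and departure processes
satisfying the min-plus service-curve property
`D(0,s) ≥ inf_{0≤u≤s}{A(0,u)+S(u,s)}`, the virtual delay
`W(t) = inf{w ≥ 0 : A(0,t) ≤ D(0,t+w)}` satisfies
`P(W(t) > w) ≤ P(sup_{0≤u≤t}{A(u,t) - S(u,t+w)} ≥ 0)`. -/
theorem delay_bound_service_curve {Ω : Type*} [MeasurableSpace Ω] (μ : Measure Ω)
    [IsProbabilityMeasure μ]
    (A S D : ℕ → ℕ → Ω → ℝ)
    (hA_nn : ∀ s t ω, 0 ≤ A s t ω) (hS_nn : ∀ s t ω, 0 ≤ S s t ω)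
    (hD_nn : ∀ s t ω, 0 ≤ D s t ω)
    (hA_add : ∀ s u t : ℕ, s ≤ u → u ≤ t → ∀ ω, A s t ω = A s u ω + A u t ω)
    (hS_add : ∀ s u t : ℕ, s ≤ u → u ≤ t → ∀ ω, S s t ω = S s u ω + S u t ω)
    (hservice : ∀ s : ℕ, ∀ ω, sInf ((fun u => A 0 u ω + S u s ω) '' {u | u ≤ s}) ≤ D 0 s ω)
    (W : ℕ → Ω → ℕ)
    (hW : ∀ t ω, W t ω = sInf {w : ℕ | A 0 t ω ≤ D 0 (t + w) ω})
    (t w : ℕ) :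
    μ {ω | w < W t ω}
      ≤ μ {ω | 0 ≤ (Finset.Icc 0 t).sup' (by simp) (fun u => A u t ω - S u (t + w) ω)} := by
  apply measure_mono
  intro ω hω
  simp only [Set.mem_setOf_eq] at hω ⊢
  -- w not in the set, so A 0 t ω > D 0 (t+w) ω
  have hnot : ¬ (A 0 t ω ≤ D 0 (t + w) ω) := by
    intro h
    have : W t ω ≤ w := by
      rw [hW]
      exact Nat.sInf_le h
    omega
  push_neg at hnot
  -- the sInf is attained
  have hfin : ((fun u => A 0 u ω + S u (t + w) ω) '' {u | u ≤ t + w}).Finite :=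
    (Set.finite_Iic (t + w)).image _
  have hne : ((fun u => A 0 u ω + S u (t + w) ω) '' {u | u ≤ t + w}).Nonempty :=
    ⟨_, ⟨0, by simp, rfl⟩⟩
  obtain ⟨u, hu, heq⟩ := hne.csInf_mem hfin
  have hlt : A 0 u ω + S u (t + w) ω < A 0 t ω := by
    rw [show A 0 u ω + S u (t + w) ω = _ from heq]; exact lt_of_le_of_lt (hservice (t + w) ω) hnot
  have hut : u ≤ t := by
    by_contra h
    push_neg at h
    have : A 0 u ω = A 0 t ω + A t u ω := hA_add 0 t u (Nat.zero_le _) h.le ω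
    nlinarith [hA_nn t u ω, hS_nn u (t + w) ω]
  have hsplit : A 0 t ω = A 0 u ω + A u t ω := hA_add 0 u t (Nat.zero_le _) hut ω
  have : 0 ≤ A u t ω - S u (t + w) ω := by linarith
  exact le_trans this (Finset.le_sup' (fun u => A u t ω - S u (t + w) ω) (Finset.mem_Icc.mpr ⟨Nat.zero_le _, hut⟩))
end
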